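/- arXiv:1807.05881 — 3 statements merged into one kernel-verified Lean document; each statement's English description precedes it below -/
import Mathlib

section
/- The set E_6 = {c ∈ L_6 : ⟨k_6,c⟩ = −1 and ⟨c,c⟩ = −1} of (−1)-classes has exactly 27 elements. (This is the lattice-theoretic form of the Cayley–Salmon theorem: a smooth cubic surface contains 27 lines, whose classes are exactly the (−1)-classes.) -/
/-- The intersection form on the Neron-Severi lattice `L_r = ℤ^(r+1)` of a weak del Pezzo
surface of degree `9 - r` in a type 1 basis: `⟨v,w⟩ = v₀w₀ - v₁w₁ - ⋯ - vᵣwᵣ`. -/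
def nsForm (r : ℕ) (v w : Fin (r + 1) → ℤ) : ℤ :=
  v 0 * w 0 - ∑ i : Fin r, v i.succ * w i.succ

/-- The canonical class `k_r = -3e₀ + e₁ + ⋯ + e_r`. -/
def canK (r : ℕ) : Fin (r + 1) → ℤ := fun i => if i = 0 then -3 else 1

/-- The standard basis vector `e_j` of `L_r`. -/
def eVec (r : ℕ) (j : Fin (r + 1)) : Fin (r + 1) → ℤ := fun i => if i = j then 1 else 0

/-- The set of (-2)-classes `R_r = {c : ⟨k_r,c⟩ = 0, ⟨c,c⟩ = -2}`. -/
def Rset (r : ℕ) : Set (Fin (r + 1) → ℤ) :=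
  {c | nsForm r (canK r) c = 0 ∧ nsForm r c c = -2}

/-- The set of (-1)-classes `E_r = {c : ⟨k_r,c⟩ = -1, ⟨c,c⟩ = -1}`. -/
def Eset (r : ℕ) : Set (Fin (r + 1) → ℤ) :=
  {c | nsForm r (canK r) c = -1 ∧ nsForm r c c = -1}

/-- The set of minimal-family classes `F_r = {c : ⟨k_r,c⟩ = -2, ⟨c,c⟩ = 0}`. -/
def Fset (r : ℕ) : Set (Fin (r + 1) → ℤ) :=
  {c | nsForm r (canK r) c = -2 ∧ nsForm r c c = 0}


/-!
Write `c = a e₀ + ∑ bᵢ eᵢ`. The two defining equations of a (−1)-class say `∑ bᵢ = 1 - 3a` and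
`∑ bᵢ² = a² + 1`, so Cauchy–Schwarz gives `(1 - 3a)² ≤ r (a² + 1)`, which for `r ≤ 6` forces
`0 ≤ a ≤ 2`. Moreover `∑ (bᵢ² - bᵢ) = a (a + 3)` and `∑ (bᵢ² + bᵢ) = (a - 1)(a - 2)`, and one of
these vanishes for each such `a`; as every summand is a nonnegative integer, all `|bᵢ| ≤ 1`.
The (−1)-classes therefore lie in a finite box, and a count inside it finds the 27 classes
`eᵢ`, `e₀ - eᵢ - eⱼ` and `2e₀ - ∑_{k ≠ i} eₖ`.
-/

open Finset

variable {r : ℕ} {c : Fin (r + 1) → ℤ}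

lemma nsForm_canK_left (c : Fin (r + 1) → ℤ) :
    nsForm r (canK r) c = -3 * c 0 - ∑ i : Fin r, c i.succ := by
  simp [nsForm, canK]

lemma nsForm_self (c : Fin (r + 1) → ℤ) :
    nsForm r c c = c 0 ^ 2 - ∑ i : Fin r, c i.succ ^ 2 := by
  simp [nsForm, sq]

lemma sum_succ_of_mem_Eset (hc : c ∈ Eset r) : ∑ i : Fin r, c i.succ = 1 - 3 * c 0 := by
  have := hc.1
  rw [nsForm_canK_left] at this
  linarith

lemma sum_sq_succ_of_mem_Eset (hc : c ∈ Eset r) : ∑ i : Fin r, c i.succ ^ 2 = c 0 ^ 2 + 1 := by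
  have := hc.2
  rw [nsForm_self] at this
  linarith

lemma apply_zero_mem_Icc_of_mem_Eset (hr : r ≤ 6) (hc : c ∈ Eset r) : c 0 ∈ Set.Icc 0 2 := by
  have hCS := sq_sum_le_card_mul_sum_sq (s := (univ : Finset (Fin r))) (f := fun i => c i.succ)
  rw [card_univ, Fintype.card_fin, sum_succ_of_mem_Eset hc, sum_sq_succ_of_mem_Eset hc] at hCS
  have hCS6 : (1 - 3 * c 0) ^ 2 ≤ 6 * (c 0 ^ 2 + 1) :=
    hCS.trans (mul_le_mul_of_nonneg_right (by exact_mod_cast hr) (by positivity))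
  constructor <;> nlinarith

lemma sum_sq_sub_self_of_mem_Eset (hc : c ∈ Eset r) :
    ∑ i : Fin r, (c i.succ ^ 2 - c i.succ) = c 0 * (c 0 + 3) := by
  rw [sum_sub_distrib, sum_sq_succ_of_mem_Eset hc, sum_succ_of_mem_Eset hc]
  ring

lemma sum_sq_add_self_of_mem_Eset (hc : c ∈ Eset r) :
    ∑ i : Fin r, (c i.succ ^ 2 + c i.succ) = (c 0 - 1) * (c 0 - 2) := by
  rw [sum_add_distrib, sum_sq_succ_of_mem_Eset hc, sum_succ_of_mem_Eset hc]
  ring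

lemma Int.abs_le_one_of_sq_le_abs {b : ℤ} (h : b ^ 2 ≤ |b|) : |b| ≤ 1 := by
  rw [← sq_abs] at h
  nlinarith [abs_nonneg b]

lemma abs_apply_succ_le_one_of_mem_Eset (hr : r ≤ 6) (hc : c ∈ Eset r) (i : Fin r) :
    |c i.succ| ≤ 1 := by
  obtain ⟨ha0, ha2⟩ := apply_zero_mem_Icc_of_mem_Eset hr hc
  refine Int.abs_le_one_of_sq_le_abs ?_
  obtain ha | ha : c 0 = 0 ∨ 1 ≤ c 0 := by omega
  · have hle : ∑ j : Fin r, (c j.succ ^ 2 - c j.succ) ≤ 0 := by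
      rw [sum_sq_sub_self_of_mem_Eset hc, ha, zero_mul]
    have hi := single_le_sum (fun j _ => by nlinarith [sq_nonneg (c j.succ - 1)]) (mem_univ i)
      |>.trans hle
    linarith [le_abs_self (c i.succ)]
  · have hle : ∑ j : Fin r, (c j.succ ^ 2 + c j.succ) ≤ 0 := by
      rw [sum_sq_add_self_of_mem_Eset hc]
      nlinarith
    have hi := single_le_sum (fun j _ => by nlinarith [sq_nonneg (c j.succ + 1)]) (mem_univ i)
      |>.trans hle
    linarith [neg_abs_le (c i.succ)]

noncomputable def classBox (r : ℕ) : Finset (Fin (r + 1) → ℤ) :=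
  Fintype.piFinset (Fin.cons (Icc 0 2) fun _ => Icc (-1) 1)

lemma Eset_subset_classBox (hr : r ≤ 6) : Eset r ⊆ classBox r := by
  intro c hc
  rw [mem_coe, classBox, Fintype.mem_piFinset]
  intro i
  cases i using Fin.cases with
  | zero => simpa using apply_zero_mem_Icc_of_mem_Eset hr hc
  | succ i => simpa [← abs_le] using abs_apply_succ_le_one_of_mem_Eset hr hc i

instance (r : ℕ) : DecidablePred (· ∈ Eset r) :=
  fun _ => inferInstanceAs (Decidable (_ ∧ _))

lemma Eset_eq_filter_classBox (hr : r ≤ 6) : Eset r = ↑((classBox r).filter (· ∈ Eset r)) := by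
  ext c
  rw [coe_filter, Set.mem_ofPred_eq]
  exact ⟨fun hc => ⟨Eset_subset_classBox hr hc, hc⟩, And.right⟩

set_option maxRecDepth 20000 in
/-- Cayley–Salmon, lattice form: the set of (-1)-classes for r = 6 (cubic surface)
has exactly 27 elements. -/
theorem stmt_7 : (Eset 6).ncard = 27 := by
  rw [Eset_eq_filter_classBox le_rfl, Set.ncard_coe_finset]
  decide
end

section
/- For every integer r with 2 ≤ r ≤ 8, the canonical class k_r = −3e_0 + e_1 + ⋯ + e_r is the unique element c ∈ L_r satisfying ⟨c,c⟩ = 9 − r and ⟨c,e⟩ = −1 for every e ∈ E_r = {c ∈ L_r : ⟨k_r,c⟩ = −1 and ⟨c,c⟩ = −1}. (This uniqueness is used in the proof that the Cremona invariant determines the Neron-Severi lattice.) -/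
/-!
Testing against the exceptional curves `e₁, …, e_r` forces `c i = 1` for `i ≥ 1`; testing against
the line class `e₀ - e₁ - e₂` (which needs `r ≥ 2`) then forces `c 0 = -3`.
-/

lemma nsForm_sub_right (r : ℕ) (c u v : Fin (r + 1) → ℤ) :
    nsForm r c (u - v) = nsForm r c u - nsForm r c v := by
  simp only [nsForm, Pi.sub_apply, mul_sub, Finset.sum_sub_distrib]
  ring

lemma nsForm_eVec_zero (r : ℕ) (c : Fin (r + 1) → ℤ) : nsForm r c (eVec r 0) = c 0 := by
  simp [nsForm, eVec, Fin.succ_ne_zero]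

lemma nsForm_eVec_succ (r : ℕ) (c : Fin (r + 1) → ℤ) (i : Fin r) :
    nsForm r c (eVec r i.succ) = -c i.succ := by
  simp [nsForm, eVec, (Fin.succ_ne_zero i).symm, Fin.succ_inj, mul_ite]

lemma nsForm_canK_self (r : ℕ) : nsForm r (canK r) (canK r) = 9 - r := by
  simp [nsForm, canK, Fin.succ_ne_zero]

lemma eVec_succ_mem_Eset (r : ℕ) (i : Fin r) : eVec r i.succ ∈ Eset r := by
  refine ⟨?_, ?_⟩ <;> simp [nsForm_eVec_succ, canK, eVec, Fin.succ_ne_zero]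

/-- The line through the `i`-th and `j`-th blown-up points. -/
def lineClass (r : ℕ) (i j : Fin r) : Fin (r + 1) → ℤ :=
  eVec r 0 - eVec r i.succ - eVec r j.succ

lemma nsForm_lineClass (r : ℕ) (c : Fin (r + 1) → ℤ) (i j : Fin r) :
    nsForm r c (lineClass r i j) = c 0 + c i.succ + c j.succ := by
  simp only [lineClass, nsForm_sub_right, nsForm_eVec_zero, nsForm_eVec_succ]
  ring

lemma lineClass_mem_Eset (r : ℕ) {i j : Fin r} (hij : i ≠ j) : lineClass r i j ∈ Eset r := by
  have hij' : i.succ ≠ j.succ := (Fin.succ_injective r).ne hij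
  refine ⟨?_, ?_⟩
  · simp [nsForm_lineClass, canK, Fin.succ_ne_zero]
  · rw [nsForm_lineClass]
    simp [lineClass, eVec, (Fin.succ_ne_zero _).symm, hij', hij'.symm]

lemma eq_canK_of_forall_Eset (r : ℕ) (hr : 2 ≤ r) (c : Fin (r + 1) → ℤ)
    (hE : ∀ e ∈ Eset r, nsForm r c e = -1) : c = canK r := by
  have hsucc (i : Fin r) : c i.succ = 1 := by
    have := hE _ (eVec_succ_mem_Eset r i)
    rw [nsForm_eVec_succ] at this
    omega
  have hzero : c 0 = -3 := by
    have := hE _ (lineClass_mem_Eset r (i := ⟨0, by omega⟩) (j := ⟨1, by omega⟩) (by simp))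
    rw [nsForm_lineClass, hsucc, hsucc] at this
    omega
  funext j
  cases j using Fin.cases with
  | zero => simp [canK, hzero]
  | succ i => simp [canK, Fin.succ_ne_zero, hsucc]

theorem stmt_16_general (r : ℕ) (h2 : 2 ≤ r) (c : Fin (r + 1) → ℤ) :
    (nsForm r c c = 9 - (r : ℤ) ∧ ∀ e ∈ Eset r, nsForm r c e = -1) ↔ c = canK r := by
  constructor
  · exact fun ⟨_, hE⟩ => eq_canK_of_forall_Eset r h2 c hE
  · rintro rfl
    exact ⟨nsForm_canK_self r, fun e he => he.1⟩

/-- For 2 ≤ r ≤ 8 the canonical class k_r is the unique class c with ⟨c,c⟩ = 9-r and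
⟨c,e⟩ = -1 for every (-1)-class e. -/
theorem stmt_16 (r : ℕ) (h2 : 2 ≤ r) (h8 : r ≤ 8) (c : Fin (r + 1) → ℤ) :
    (nsForm r c c = 9 - (r : ℤ) ∧ ∀ e ∈ Eset r, nsForm r c e = -1) ↔ c = canK r :=
  stmt_16_general r h2 c
end

section
/- (Classification of real structures on the Neron-Severi lattice of a degree 6 weak del Pezzo surface.) Consider L_3 with form ⟨·,·⟩ and canonical class k_3 = −3e_0 + e_1 + e_2 + e_3. Define the four ℤ-linear involutions σ_{A_0}, σ_{A_1}, σ_{A_1'}, σ_{2A_1} of L_3 by their values on (e_0,e_1,e_2,e_3): σ_{A_0} is the identity; σ_{A_1} sends (e_0,e_1,e_2,e_3) to (e_0,e_2,e_1,e_3); σ_{A_1'} sends it to (2e_0−e_1−e_2−e_3, e_0−e_2−e_3, e_0−e_1−e_3, e_0−e_1−e_2); σ_{2A_1} sends it to (2e_0−e_1−e_2−e_3, e_0−e_1−e_3, e_0−e_2−e_3, e_0−e_1−e_2). Then: (a) each of these four maps is a ℤ-linear involution of L_3 that preserves the form ⟨·,·⟩ and fixes k_3; (b) every ℤ-linear involution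 σ of L_3 that preserves ⟨·,·⟩ and fixes k_3 is conjugate to exactly one of these four by a ℤ-linear automorphism φ of L_3 preserving ⟨·,·⟩ with φ(k_3) = k_3; in particular no two of the four involutions are so conjugate. -/
/-- Matrix of the identity involution σ_{A₀} on L₃ (columns are images of e₀,…,e₃). -/
def matA0 : Matrix (Fin 4) (Fin 4) ℤ := 1

/-- Matrix of σ_{A₁} : (e₀,e₁,e₂,e₃) ↦ (e₀,e₂,e₁,e₃). -/
def matA1 : Matrix (Fin 4) (Fin 4) ℤ :=
  !![1, 0, 0, 0; 0, 0, 1, 0; 0, 1, 0, 0; 0, 0, 0, 1]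

/-- Matrix of σ_{A₁'} : (e₀,e₁,e₂,e₃) ↦
(2e₀-e₁-e₂-e₃, e₀-e₂-e₃, e₀-e₁-e₃, e₀-e₁-e₂). -/
def matA1' : Matrix (Fin 4) (Fin 4) ℤ :=
  !![2, 1, 1, 1; -1, 0, -1, -1; -1, -1, 0, -1; -1, -1, -1, 0]

/-- Matrix of σ_{2A₁} : (e₀,e₁,e₂,e₃) ↦
(2e₀-e₁-e₂-e₃, e₀-e₁-e₃, e₀-e₂-e₃, e₀-e₁-e₂). -/
def mat2A1 : Matrix (Fin 4) (Fin 4) ℤ :=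
  !![2, 1, 1, 1; -1, -1, 0, -1; -1, 0, -1, -1; -1, -1, -1, 0]

/-- The four ℤ-linear involutions σ_{A₀}, σ_{A₁}, σ_{A₁'}, σ_{2A₁} of L₃. -/
def sigmas : Fin 4 → ((Fin 4 → ℤ) →ₗ[ℤ] (Fin 4 → ℤ)) :=
  ![Matrix.toLin' matA0, Matrix.toLin' matA1, Matrix.toLin' matA1', Matrix.toLin' mat2A1]

/-- A ℤ-linear involution of L₃ preserving the intersection form and fixing the
canonical class k₃ (the lattice datum of a real structure). -/
def IsRealStructure (σ : (Fin 4 → ℤ) →ₗ[ℤ] (Fin 4 → ℤ)) : Prop :=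
  (∀ v, σ (σ v) = v) ∧ (∀ v w, nsForm 3 (σ v) (σ w) = nsForm 3 v w) ∧ σ (canK 3) = canK 3


/-!
An isometry of `L₃` fixing `k₃` sends `e₀` to a class `h` with `h² = 1`, `k₃·h = -3`, and
`e₁, e₂, e₃` to pairwise orthogonal `(-1)`-classes orthogonal to `h`. By Cauchy–Schwarz there are
only two such `h` and six `(-1)`-classes, so these isometries form an explicit group of twelve
matrices: the permutations of `e₁, e₂, e₃` and their composites with the Cremona involution
`e₀ ↦ 2e₀ - e₁ - e₂ - e₃`, `eᵢ ↦ e₀ - eⱼ - eₖ`. A real structure is an involution in this group, and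
the classification up to conjugacy is then a finite computation.
-/

open Matrix

def formMatrix (r : ℕ) : Matrix (Fin (r + 1)) (Fin (r + 1)) ℤ :=
  diagonal fun i => if i = 0 then 1 else -1

theorem nsForm_eq_dotProduct (r : ℕ) (v w : Fin (r + 1) → ℤ) :
    nsForm r v w = v ⬝ᵥ formMatrix r *ᵥ w := by
  simp only [nsForm, dotProduct, formMatrix, mulVec_diagonal, Fin.sum_univ_succ, ↓reduceIte,
    Fin.succ_ne_zero, ite_mul, mul_ite, one_mul, neg_mul, mul_neg, Finset.sum_neg_distrib]
  ring

theorem nsForm_mulVec_mulVec {r : ℕ} {P : Matrix (Fin (r + 1)) (Fin (r + 1)) ℤ}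
    (hP : Pᵀ * formMatrix r * P = formMatrix r) (v w : Fin (r + 1) → ℤ) :
    nsForm r (P *ᵥ v) (P *ᵥ w) = nsForm r v w := by
  rw [nsForm_eq_dotProduct, nsForm_eq_dotProduct]
  conv_rhs => rw [← hP, ← mulVec_mulVec, ← mulVec_mulVec, dotProduct_mulVec, vecMul_transpose]

theorem nsForm_three (v w : Fin 4 → ℤ) :
    nsForm 3 v w = v 0 * w 0 - (v 1 * w 1 + v 2 * w 2 + v 3 * w 3) := by
  simp [nsForm, Fin.sum_univ_three]

theorem exists_eq_vec4 (c : Fin 4 → ℤ) : ∃ a b₁ b₂ b₃, c = ![a, b₁, b₂, b₃] :=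
  ⟨c 0, c 1, c 2, c 3, by funext i; fin_cases i <;> rfl⟩

theorem bounds_of_sum_mul_self_le_three {b₁ b₂ b₃ : ℤ}
    (h : b₁ * b₁ + b₂ * b₂ + b₃ * b₃ ≤ 3) :
    (-1 ≤ b₁ ∧ b₁ ≤ 1) ∧ (-1 ≤ b₂ ∧ b₂ ≤ 1) ∧ (-1 ≤ b₃ ∧ b₃ ≤ 1) := by
  refine ⟨⟨?_, ?_⟩, ⟨?_, ?_⟩, ⟨?_, ?_⟩⟩ <;>
    nlinarith [mul_self_nonneg b₁, mul_self_nonneg b₂, mul_self_nonneg b₃]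

def lineClasses : List (Fin 4 → ℤ) := [![1, 0, 0, 0], ![2, -1, -1, -1]]

def exceptionalClasses : List (Fin 4 → ℤ) :=
  [![0, 0, 0, 1], ![0, 0, 1, 0], ![0, 1, 0, 0], ![1, -1, -1, 0], ![1, -1, 0, -1], ![1, 0, -1, -1]]

theorem mem_lineClasses {c : Fin 4 → ℤ} (hk : nsForm 3 (canK 3) c = -3)
    (hc : nsForm 3 c c = 1) : c ∈ lineClasses := by
  obtain ⟨a, b₁, b₂, b₃, rfl⟩ := exists_eq_vec4 c
  simp only [nsForm_three, canK, cons_val_zero, cons_val_one, cons_val, ↓reduceIte, Fin.reduceEq,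
    one_ne_zero] at hk hc
  -- Cauchy–Schwarz `(b₁ + b₂ + b₃)² ≤ 3 (b₁² + b₂² + b₃²)` bounds `a`
  have ha₁ : 1 ≤ a := by
    nlinarith [sq_nonneg (b₁ - b₂), sq_nonneg (b₁ - b₃), sq_nonneg (b₂ - b₃)]
  have ha₂ : a ≤ 2 := by
    nlinarith [sq_nonneg (b₁ - b₂), sq_nonneg (b₁ - b₃), sq_nonneg (b₂ - b₃)]
  obtain ⟨⟨_, _⟩, ⟨_, _⟩, ⟨_, _⟩⟩ :=
    bounds_of_sum_mul_self_le_three (b₁ := b₁) (b₂ := b₂) (b₃ := b₃) (by nlinarith)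
  interval_cases a <;> interval_cases b₁ <;> interval_cases b₂ <;> interval_cases b₃ <;>
    first | (exfalso; omega) | decide

theorem mem_exceptionalClasses {c : Fin 4 → ℤ} (hc : c ∈ Eset 3) :
    c ∈ exceptionalClasses := by
  obtain ⟨a, b₁, b₂, b₃, rfl⟩ := exists_eq_vec4 c
  obtain ⟨hk, hc⟩ := hc
  simp only [nsForm_three, canK, cons_val_zero, cons_val_one, cons_val, ↓reduceIte, Fin.reduceEq,
    one_ne_zero] at hk hc
  have ha₀ : 0 ≤ a := by
    nlinarith [sq_nonneg (b₁ - b₂), sq_nonneg (b₁ - b₃), sq_nonneg (b₂ - b₃)]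
  have ha₁ : a ≤ 1 := by
    nlinarith [sq_nonneg (b₁ - b₂), sq_nonneg (b₁ - b₃), sq_nonneg (b₂ - b₃)]
  obtain ⟨⟨_, _⟩, ⟨_, _⟩, ⟨_, _⟩⟩ :=
    bounds_of_sum_mul_self_le_three (b₁ := b₁) (b₂ := b₂) (b₃ := b₃) (by nlinarith)
  interval_cases a <;> interval_cases b₁ <;> interval_cases b₂ <;> interval_cases b₃ <;>
    first | (exfalso; omega) | decide

-- Columns are the images of `e₀, …, e₃`, as in `matA1` etc.
def isometryMatrices : List (Matrix (Fin 4) (Fin 4) ℤ) := [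
  !![1, 0, 0, 0; 0, 0, 0, 1; 0, 0, 1, 0; 0, 1, 0, 0],
  !![1, 0, 0, 0; 0, 0, 1, 0; 0, 0, 0, 1; 0, 1, 0, 0],
  !![1, 0, 0, 0; 0, 0, 0, 1; 0, 1, 0, 0; 0, 0, 1, 0],
  !![1, 0, 0, 0; 0, 0, 1, 0; 0, 1, 0, 0; 0, 0, 0, 1],
  !![1, 0, 0, 0; 0, 1, 0, 0; 0, 0, 0, 1; 0, 0, 1, 0],
  !![1, 0, 0, 0; 0, 1, 0, 0; 0, 0, 1, 0; 0, 0, 0, 1],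
  !![2, 1, 1, 1; -1, -1, -1, 0; -1, -1, 0, -1; -1, 0, -1, -1],
  !![2, 1, 1, 1; -1, -1, 0, -1; -1, -1, -1, 0; -1, 0, -1, -1],
  !![2, 1, 1, 1; -1, -1, -1, 0; -1, 0, -1, -1; -1, -1, 0, -1],
  !![2, 1, 1, 1; -1, -1, 0, -1; -1, 0, -1, -1; -1, -1, -1, 0],
  !![2, 1, 1, 1; -1, 0, -1, -1; -1, -1, -1, 0; -1, -1, 0, -1],
  !![2, 1, 1, 1; -1, 0, -1, -1; -1, -1, 0, -1; -1, -1, -1, 0]]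

theorem of_columns_mem_isometryMatrices :
    ∀ c₀ ∈ lineClasses, ∀ c₁ ∈ exceptionalClasses, ∀ c₂ ∈ exceptionalClasses,
    ∀ c₃ ∈ exceptionalClasses,
    nsForm 3 c₀ c₁ = 0 → nsForm 3 c₀ c₂ = 0 → nsForm 3 c₀ c₃ = 0 →
    nsForm 3 c₁ c₂ = 0 → nsForm 3 c₁ c₃ = 0 → nsForm 3 c₂ c₃ = 0 →
    (of ![c₀, c₁, c₂, c₃])ᵀ ∈ isometryMatrices := by
  decide

theorem isometry_of_mem_isometryMatrices : ∀ P ∈ isometryMatrices,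
    Pᵀ * formMatrix 3 * P = formMatrix 3 ∧ P *ᵥ canK 3 = canK 3 := by
  decide

theorem exists_inverse_mem_isometryMatrices :
    ∀ P ∈ isometryMatrices, ∃ Q ∈ isometryMatrices, P * Q = 1 ∧ Q * P = 1 := by
  decide

theorem mem_isometryMatrices {P : Matrix (Fin 4) (Fin 4) ℤ}
    (hP : ∀ v w, nsForm 3 (P *ᵥ v) (P *ᵥ w) = nsForm 3 v w) (hk : P *ᵥ canK 3 = canK 3) :
    P ∈ isometryMatrices := by
  have hP_eq : P = (of ![P *ᵥ eVec 3 0, P *ᵥ eVec 3 1, P *ᵥ eVec 3 2, P *ᵥ eVec 3 3])ᵀ := by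
    ext i j
    fin_cases j <;> simp [mulVec, dotProduct, eVec]
  have hkP (v : Fin 4 → ℤ) : nsForm 3 (canK 3) (P *ᵥ v) = nsForm 3 (canK 3) v := by
    simpa [hk] using hP (canK 3) v
  rw [hP_eq]
  refine of_columns_mem_isometryMatrices _ (mem_lineClasses ?_ ?_)
    _ (mem_exceptionalClasses ⟨?_, ?_⟩) _ (mem_exceptionalClasses ⟨?_, ?_⟩)
    _ (mem_exceptionalClasses ⟨?_, ?_⟩) ?_ ?_ ?_ ?_ ?_ ?_ <;>
  simp only [hkP, hP] <;> decide

theorem isRealStructure_toLin'_iff {M : Matrix (Fin 4) (Fin 4) ℤ} :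
    IsRealStructure (toLin' M) ↔ M ∈ isometryMatrices ∧ M * M = 1 := by
  simp only [IsRealStructure, toLin'_apply]
  constructor
  · rintro ⟨hinv, hform, hk⟩
    exact ⟨mem_isometryMatrices hform hk, ext_iff_mulVec.2 fun v => by simpa using hinv v⟩
  · rintro ⟨hM, hMM⟩
    obtain ⟨hform, hk⟩ := isometry_of_mem_isometryMatrices M hM
    exact ⟨fun v => by rw [mulVec_mulVec, hMM, one_mulVec], nsForm_mulVec_mulVec hform, hk⟩

def IsIsometricConj (σ τ : (Fin 4 → ℤ) →ₗ[ℤ] (Fin 4 → ℤ)) : Prop :=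
  ∃ φ : (Fin 4 → ℤ) ≃ₗ[ℤ] (Fin 4 → ℤ), (∀ v w, nsForm 3 (φ v) (φ w) = nsForm 3 v w) ∧
    φ (canK 3) = canK 3 ∧ ∀ v, φ (σ v) = τ (φ v)

theorem isIsometricConj_toLin'_iff {M N : Matrix (Fin 4) (Fin 4) ℤ} :
    IsIsometricConj (toLin' M) (toLin' N) ↔ ∃ P ∈ isometryMatrices, P * M = N * P := by
  constructor
  · rintro ⟨φ, hform, hk, hconj⟩
    have hφ (v : Fin 4 → ℤ) : LinearMap.toMatrix' φ.toLinearMap *ᵥ v = φ v :=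
      LinearMap.toMatrix'_mulVec _ v
    refine ⟨LinearMap.toMatrix' φ.toLinearMap,
      mem_isometryMatrices (by simpa only [hφ]) (by rw [hφ, hk]),
      ext_iff_mulVec.2 fun v => ?_⟩
    simpa [← mulVec_mulVec, hφ] using hconj v
  · rintro ⟨P, hP, hconj⟩
    obtain ⟨Q, -, hPQ, hQP⟩ := exists_inverse_mem_isometryMatrices P hP
    obtain ⟨hform, hk⟩ := isometry_of_mem_isometryMatrices P hP
    have hφ (v : Fin 4 → ℤ) : toLin'OfInv hQP hPQ v = P *ᵥ v := rfl
    refine ⟨toLin'OfInv hQP hPQ, ?_, ?_, fun v => ?_⟩ <;> simp only [hφ, toLin'_apply]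
    · exact nsForm_mulVec_mulVec hform
    · exact hk
    · rw [mulVec_mulVec, hconj, ← mulVec_mulVec]

def sigmaMatrices : Fin 4 → Matrix (Fin 4) (Fin 4) ℤ := ![matA0, matA1, matA1', mat2A1]

theorem sigmas_eq_toLin' (i : Fin 4) : sigmas i = toLin' (sigmaMatrices i) := by
  fin_cases i <;> rfl

theorem sigmaMatrices_mem (i : Fin 4) :
    sigmaMatrices i ∈ isometryMatrices ∧ sigmaMatrices i * sigmaMatrices i = 1 := by
  revert i
  decide

theorem existsUnique_conj_sigmaMatrices : ∀ M ∈ isometryMatrices, M * M = 1 →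
    ∃! i : Fin 4, ∃ P ∈ isometryMatrices, P * M = sigmaMatrices i * P := by
  unfold ExistsUnique
  decide

/-- (a) Each of σ_{A₀}, σ_{A₁}, σ_{A₁'}, σ_{2A₁} is a ℤ-linear involution of L₃
preserving the form and fixing k₃; (b) every such involution is conjugate to exactly
one of the four by a ℤ-linear automorphism of L₃ preserving the form and fixing k₃
(in particular no two of the four are so conjugate). -/
theorem stmt_19 :
    (∀ i : Fin 4, IsRealStructure (sigmas i)) ∧
    (∀ σ : (Fin 4 → ℤ) →ₗ[ℤ] (Fin 4 → ℤ), IsRealStructure σ →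
      ∃! i : Fin 4, ∃ φ : (Fin 4 → ℤ) ≃ₗ[ℤ] (Fin 4 → ℤ),
        (∀ v w, nsForm 3 (φ v) (φ w) = nsForm 3 v w) ∧
        φ (canK 3) = canK 3 ∧
        ∀ v, φ (σ v) = sigmas i (φ v)) := by
  refine ⟨fun i => ?_, fun σ hσ => ?_⟩
  · rw [sigmas_eq_toLin', isRealStructure_toLin'_iff]
    exact sigmaMatrices_mem i
  · obtain ⟨M, rfl⟩ : ∃ M, toLin' M = σ := ⟨_, toLin'_toMatrix' σ⟩
    obtain ⟨hM, hMM⟩ := isRealStructure_toLin'_iff.1 hσ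
    change ∃! i, IsIsometricConj (toLin' M) (sigmas i)
    simp only [sigmas_eq_toLin', isIsometricConj_toLin'_iff]
    exact existsUnique_conj_sigmaMatrices M hM hMM
end
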